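/- (Serdyukov–Christofides bound) Let V be a finite vertex set with |V| ≥ 3 and ρ a symmetric positive weight function on pairs satisfying the triangle inequality. Let T be a minimum spanning tree, X₁ the odd-degree vertices of T, and M a minimum-weight perfect matching on X₁. Then any Hamiltonian cycle obtained by shortcutting an Eulerian circuit of the multigraph T ∪ M has weight strictly less than 3/2 times the minimum Hamiltonian cycle weight. -/

import Mathlib

open scoped Classical

/-- Cyclic weight of a closed tour given by the vertex list `l`:
the sum of `ρ` over consecutive pairs, including the pair closing the cycle. -/
def cycWeight {V : Type*} (ρ : V → V → ℝ) (l : List V) : ℝ :=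
  ((l.zip (l.rotate 1)).map fun p => ρ p.1 p.2).sum

/-- The (cyclic) list of edges of a closed tour given by the vertex list `l`. -/
def cycEdges {V : Type*} (l : List V) : List (Sym2 V) :=
  (l.zip (l.rotate 1)).map (Sym2.mk).uncurry

/-- The list of endpoints of a list of matching pairs. -/
def matchVerts {V : Type*} (M : List (V × V)) : List V :=
  M.flatMap fun p => [p.1, p.2]

/-- `M` is a perfect matching on the vertex set `X`: a partition of `X` into pairs. -/
def IsPM {V : Type*} [DecidableEq V] (X : Finset V) (M : List (V × V)) : Prop :=
  (matchVerts M).Nodup ∧ (matchVerts M).toFinset = X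

/-- The weight of a matching: the sum of weights of its pairs. -/
def mWeight {V : Type*} (ρ : V → V → ℝ) (M : List (V × V)) : ℝ :=
  (M.map fun p => ρ p.1 p.2).sum

/-- Total edge weight of a graph. -/
noncomputable def gWeight {V : Type*} [Fintype V] (f : Sym2 V → ℝ) (T : SimpleGraph V) : ℝ :=
  ∑ e ∈ T.edgeSet.toFinset, f e

/-- The weight of a walk in the graph `G` with edge weights `f`
(edges are counted with multiplicity). -/
def walkWeight {V : Type*} (G : SimpleGraph V) (f : Sym2 V → ℝ) {u v : V} (p : G.Walk u v) : ℝ :=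
  (p.edges.map f).sum

/-- Shortest-path distance between `i` and `j` (metric closure of `G`). -/
noncomputable def sdist {V : Type*} (G : SimpleGraph V) (f : Sym2 V → ℝ) (i j : V) : ℝ :=
  sInf {x | ∃ p : G.Walk i j, x = walkWeight G f p}

/-!
Shortcutting never increases weight, so the shortcut tour weighs at most `ρ(T) + ρ(M)`.
Deleting one edge, of positive weight, from an optimal tour `L₀` leaves a Hamiltonian path,
which is a spanning tree, so `ρ(T) < ρ(L₀)`. Restricting `L₀` to the odd-degree vertices
of `T` (shortcutting again) and taking alternate edges of the resulting cycle, which has even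
length, splits it into two perfect matchings on them, so `2 ρ(M) ≤ ρ(L₀)`.
-/

section Tours

variable {V : Type*} {ρ : V → V → ℝ}

def pathWeight (ρ : V → V → ℝ) : List V → ℝ
  | a :: b :: t => ρ a b + pathWeight ρ (b :: t)
  | _ => 0

@[simp] lemma pathWeight_nil : pathWeight ρ [] = 0 := rfl

@[simp] lemma pathWeight_singleton (a : V) : pathWeight ρ [a] = 0 := rfl

@[simp] lemma pathWeight_cons_cons (a b : V) (t : List V) :
    pathWeight ρ (a :: b :: t) = ρ a b + pathWeight ρ (b :: t) := rfl

lemma pathWeight_append_singleton : ∀ (l : List V) (hl : l ≠ []) (b : V),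
    pathWeight ρ (l ++ [b]) = pathWeight ρ l + ρ (l.getLast hl) b
  | [a], _, b => by simp
  | a :: c :: t, _, b => by
    have ih := pathWeight_append_singleton (c :: t) (List.cons_ne_nil _ _) b
    simp only [List.cons_append] at ih
    simp [ih, add_assoc]

lemma cycWeight_eq_sum_zipWith (l : List V) :
    cycWeight ρ l = (List.zipWith ρ l (l.rotate 1)).sum := by
  rw [cycWeight, List.map_zip_eq_zipWith]
  rfl

lemma cycWeight_rotate (l : List V) (n : ℕ) : cycWeight ρ (l.rotate n) = cycWeight ρ l := by
  rw [cycWeight_eq_sum_zipWith, cycWeight_eq_sum_zipWith, List.rotate_rotate, add_comm,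
    ← List.rotate_rotate, ← List.zipWith_rotate_distrib _ _ _ _ (List.length_rotate _ _).symm]
  exact (List.rotate_perm _ _).sum_eq

lemma cycWeight_append_comm (u v : List V) : cycWeight ρ (u ++ v) = cycWeight ρ (v ++ u) := by
  rw [← List.rotate_append_length_eq, cycWeight_rotate]

lemma sum_zipWith_cons_append_singleton : ∀ (a : V) (t : List V) (b : V),
    (List.zipWith ρ (a :: t) (t ++ [b])).sum = pathWeight ρ (a :: t ++ [b])
  | a, [], b => by simp
  | a, c :: t, b => by simp [sum_zipWith_cons_append_singleton c t b]

lemma cycWeight_cons (a : V) (t : List V) :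
    cycWeight ρ (a :: t) = pathWeight ρ (a :: t ++ [a]) := by
  rw [cycWeight_eq_sum_zipWith, List.rotate_cons_succ, List.rotate_zero,
    sum_zipWith_cons_append_singleton]

lemma cycWeight_cons_eq_pathWeight_add (a : V) (t : List V) :
    cycWeight ρ (a :: t) =
      pathWeight ρ (a :: t) + ρ ((a :: t).getLast (List.cons_ne_nil a t)) a := by
  rw [cycWeight_cons, pathWeight_append_singleton]

lemma cycWeight_le_cycWeight_append_singleton (htri : ∀ i j k, ρ i j ≤ ρ i k + ρ k j)
    (l : List V) (c : V) : cycWeight ρ l ≤ cycWeight ρ (l ++ [c]) := by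
  cases l with
  | nil => simpa [cycWeight] using htri c c c
  | cons a t =>
    have hc : cycWeight ρ (a :: t ++ [c]) = pathWeight ρ (a :: t) +
        ρ ((a :: t).getLast (List.cons_ne_nil a t)) c + ρ c a := by
      rw [List.cons_append, cycWeight_cons, ← List.cons_append,
        pathWeight_append_singleton _ (by simp),
        pathWeight_append_singleton _ (List.cons_ne_nil a t)]
      simp
    rw [hc, cycWeight_cons_eq_pathWeight_add]
    linarith [htri ((a :: t).getLast (List.cons_ne_nil a t)) a c]

lemma cycWeight_le_of_sublist (htri : ∀ i j k, ρ i j ≤ ρ i k + ρ k j) {s l : List V}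
    (h : s.Sublist l) : cycWeight ρ s ≤ cycWeight ρ l := by
  suffices ∀ u, cycWeight ρ (u ++ s) ≤ cycWeight ρ (u ++ l) by simpa using this []
  induction h with
  | slnil => exact fun _ => le_rfl
  | @cons s l c _ ih =>
    intro u
    calc cycWeight ρ (u ++ s) ≤ cycWeight ρ (u ++ l) := ih u
      _ = cycWeight ρ (l ++ u) := cycWeight_append_comm u l
      _ ≤ cycWeight ρ (l ++ u ++ [c]) := cycWeight_le_cycWeight_append_singleton htri _ c
      _ = cycWeight ρ (u ++ c :: l) := by
        rw [cycWeight_append_comm (l ++ u), cycWeight_append_comm u]; rfl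
  | @cons_cons s l c _ ih => exact fun u => by simpa using ih (u ++ [c])

lemma pathWeight_lt_cycWeight (hpos : ∀ i j, i ≠ j → 0 < ρ i j) {a : V} {t : List V}
    (hl : (a :: t).Nodup) (ht : t ≠ []) : pathWeight ρ (a :: t) < cycWeight ρ (a :: t) := by
  have hlast : (a :: t).getLast (List.cons_ne_nil a t) ∈ t := by
    rw [List.getLast_cons ht]
    exact List.getLast_mem ht
  have hne : (a :: t).getLast (List.cons_ne_nil a t) ≠ a :=
    fun h => (List.nodup_cons.mp hl).1 (h ▸ hlast)
  rw [cycWeight_cons_eq_pathWeight_add]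
  linarith [hpos _ _ hne]

end Tours

section Matchings

variable {V : Type*} {ρ : V → V → ℝ}

def pairUp : List V → List (V × V)
  | a :: b :: t => (a, b) :: pairUp t
  | _ => []

@[simp] lemma pairUp_nil : pairUp ([] : List V) = [] := rfl

@[simp] lemma pairUp_singleton (a : V) : pairUp [a] = [] := rfl

@[simp] lemma pairUp_cons_cons (a b : V) (t : List V) :
    pairUp (a :: b :: t) = (a, b) :: pairUp t := rfl

@[simp] lemma mWeight_nil : mWeight ρ [] = 0 := rfl

@[simp] lemma mWeight_cons (p : V × V) (M : List (V × V)) :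
    mWeight ρ (p :: M) = ρ p.1 p.2 + mWeight ρ M := List.sum_cons

@[simp] lemma matchVerts_cons (p : V × V) (M : List (V × V)) :
    matchVerts (p :: M) = p.1 :: p.2 :: matchVerts M := rfl

lemma even_length_of_even_length_cons_cons {a b : V} {t : List V}
    (h : Even (a :: b :: t).length) : Even t.length := by
  simpa [Nat.even_add_one, parity_simps] using h

lemma pathWeight_eq_mWeight_pairUp_add_mWeight_pairUp_tail :
    ∀ l : List V, pathWeight ρ l = mWeight ρ (pairUp l) + mWeight ρ (pairUp l.tail)
  | [] => by simp
  | [a] => by simp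
  | a :: b :: t => by
    rw [pathWeight_cons_cons, pathWeight_eq_mWeight_pairUp_add_mWeight_pairUp_tail (b :: t)]
    simp only [pairUp_cons_cons, mWeight_cons, List.tail_cons]
    ring

lemma pairUp_append_singleton (b : V) :
    ∀ l : List V, Even l.length → pairUp (l ++ [b]) = pairUp l
  | [], _ => rfl
  | [a], h => by simp at h
  | a :: c :: t, h => by
    simp [pairUp_append_singleton b t (even_length_of_even_length_cons_cons h)]

lemma matchVerts_pairUp : ∀ l : List V, Even l.length → matchVerts (pairUp l) = l
  | [], _ => rfl
  | [a], h => by simp at h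
  | a :: b :: t, h => by
    rw [pairUp_cons_cons, matchVerts_cons,
      matchVerts_pairUp t (even_length_of_even_length_cons_cons h)]

lemma cycWeight_eq_mWeight_pairUp_add_mWeight_pairUp_rotate {s : List V}
    (hs : Even s.length) :
    cycWeight ρ s = mWeight ρ (pairUp s) + mWeight ρ (pairUp (s.rotate 1)) := by
  cases s with
  | nil => simp [cycWeight]
  | cons x r =>
    rw [cycWeight_cons, pathWeight_eq_mWeight_pairUp_add_mWeight_pairUp_tail,
      pairUp_append_singleton x _ hs, List.rotate_cons_succ, List.rotate_zero]
    rfl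

lemma length_matchVerts (M : List (V × V)) : (matchVerts M).length = 2 * M.length := by
  induction M with
  | nil => rfl
  | cons p M ih => simp [ih]; ring

variable [DecidableEq V]

lemma isPM_pairUp {X : Finset V} {s : List V} (hs : s.Nodup) (hsX : s.toFinset = X)
    (he : Even s.length) : IsPM X (pairUp s) := by
  rw [IsPM, matchVerts_pairUp s he]
  exact ⟨hs, hsX⟩

lemma IsPM.even_card {X : Finset V} {M : List (V × V)} (hM : IsPM X M) : Even X.card := by
  rw [← hM.2, List.toFinset_card_of_nodup hM.1, length_matchVerts]
  exact even_two_mul _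

lemma two_mul_mWeight_le_cycWeight (htri : ∀ i j k, ρ i j ≤ ρ i k + ρ k j)
    {X : Finset V} {M : List (V × V)} (hM : IsPM X M)
    (hMmin : ∀ M', IsPM X M' → mWeight ρ M ≤ mWeight ρ M')
    {L : List V} (hL : L.Nodup) (hXL : ∀ x ∈ X, x ∈ L) :
    2 * mWeight ρ M ≤ cycWeight ρ L := by
  set s := L.filter (· ∈ X)
  have hs : s.Nodup := hL.filter _
  have hsX : s.toFinset = X := by
    ext x
    simpa [s] using hXL x
  have he : Even s.length := by
    rw [← List.toFinset_card_of_nodup hs, hsX]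
    exact hM.even_card
  have hM₁ := hMmin _ (isPM_pairUp hs hsX he)
  have hM₂ := hMmin _ (isPM_pairUp (List.nodup_rotate.mpr hs)
    (by rw [List.toFinset_eq_of_perm _ _ (s.rotate_perm 1), hsX]) (by rwa [List.length_rotate]))
  calc 2 * mWeight ρ M ≤ mWeight ρ (pairUp s) + mWeight ρ (pairUp (s.rotate 1)) := by linarith
    _ = cycWeight ρ s := (cycWeight_eq_mWeight_pairUp_add_mWeight_pairUp_rotate he).symm
    _ ≤ cycWeight ρ L := cycWeight_le_of_sublist htri List.filter_sublist

end Matchings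

section PathGraph

variable {V : Type*}

def pathEdges : List V → List (Sym2 V)
  | a :: b :: t => s(a, b) :: pathEdges (b :: t)
  | _ => []

@[simp] lemma pathEdges_cons_cons (a b : V) (t : List V) :
    pathEdges (a :: b :: t) = s(a, b) :: pathEdges (b :: t) := rfl

lemma length_pathEdges : ∀ l : List V, (pathEdges l).length = l.length - 1
  | [] => rfl
  | [a] => rfl
  | a :: b :: t => by simp [length_pathEdges (b :: t)]

lemma mem_of_mem_pathEdges : ∀ {l : List V} {e : Sym2 V} {x : V},
    e ∈ pathEdges l → x ∈ e → x ∈ l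
  | a :: b :: t, e, x, he, hx => by
    rcases List.mem_cons.mp he with rfl | he
    · rcases Sym2.mem_iff.mp hx with rfl | rfl <;> simp
    · exact List.mem_cons_of_mem a (mem_of_mem_pathEdges he hx)

lemma nodup_pathEdges : ∀ {l : List V}, l.Nodup → (pathEdges l).Nodup
  | [], _ | [_], _ => List.nodup_nil
  | a :: b :: t, hl => by
    rw [pathEdges_cons_cons, List.nodup_cons]
    exact ⟨fun he => (List.nodup_cons.mp hl).1 (mem_of_mem_pathEdges he (Sym2.mem_mk_left a b)),
      nodup_pathEdges (List.nodup_cons.mp hl).2⟩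

lemma not_isDiag_of_mem_pathEdges : ∀ {l : List V}, l.Nodup → ∀ {e : Sym2 V},
    e ∈ pathEdges l → ¬e.IsDiag
  | a :: b :: t, hl, e, he => by
    rcases List.mem_cons.mp he with rfl | he
    · rw [Sym2.mk_isDiag_iff]
      rintro rfl
      exact (List.nodup_cons.mp hl).1 List.mem_cons_self
    · exact not_isDiag_of_mem_pathEdges (List.nodup_cons.mp hl).2 he

lemma sum_map_pathEdges {ρ : V → V → ℝ} (hsym : ∀ i j, ρ i j = ρ j i) :
    ∀ l : List V, ((pathEdges l).map (Sym2.lift ⟨ρ, hsym⟩)).sum = pathWeight ρ l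
  | [] | [_] => rfl
  | a :: b :: t => by simp [sum_map_pathEdges hsym (b :: t)]

def pathGraph (l : List V) : SimpleGraph V := SimpleGraph.fromEdgeSet {e | e ∈ pathEdges l}

lemma edgeSet_pathGraph {l : List V} (hl : l.Nodup) :
    (pathGraph l).edgeSet = {e | e ∈ pathEdges l} := by
  rw [pathGraph, SimpleGraph.edgeSet_fromEdgeSet, sdiff_eq_left, Set.disjoint_left]
  exact fun e he => not_isDiag_of_mem_pathEdges hl he

lemma pathGraph_reachable_of_mem : ∀ {a v : V} {t : List V}, (a :: t).Nodup → v ∈ a :: t →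
    (pathGraph (a :: t)).Reachable a v
  | a, v, [], _, hv => by rw [List.mem_singleton.mp hv]
  | a, v, b :: t, hl, hv => by
    rcases List.mem_cons.mp hv with rfl | hv
    · rfl
    have hmono : pathGraph (b :: t) ≤ pathGraph (a :: b :: t) :=
      SimpleGraph.fromEdgeSet_mono fun e he => List.mem_cons_of_mem _ he
    have hadj : (pathGraph (a :: b :: t)).Adj a b := by
      rw [pathGraph, SimpleGraph.fromEdgeSet_adj]
      exact ⟨List.mem_cons_self, fun h => (List.nodup_cons.mp hl).1 (h ▸ List.mem_cons_self)⟩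
    exact hadj.reachable.trans
      ((pathGraph_reachable_of_mem (List.nodup_cons.mp hl).2 hv).mono hmono)

lemma isTree_pathGraph [Fintype V] {l : List V} (hl : l.Nodup) (hspan : ∀ v, v ∈ l)
    [Nonempty V] : (pathGraph l).IsTree := by
  obtain ⟨a, t, rfl⟩ :=
    List.exists_cons_of_ne_nil (List.ne_nil_of_mem (hspan (Classical.arbitrary V)))
  rw [SimpleGraph.isTree_iff_connected_and_card]
  refine ⟨⟨fun u v => ((pathGraph_reachable_of_mem hl (hspan u)).symm.trans
    (pathGraph_reachable_of_mem hl (hspan v)))⟩, ?_⟩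
  have hcard : Nat.card V = (a :: t).length := by
    rw [Nat.card_eq_fintype_card, ← Finset.card_univ, ← List.toFinset_card_of_nodup hl]
    congr 1
    exact (Finset.eq_univ_of_forall fun v => List.mem_toFinset.mpr (hspan v)).symm
  rw [edgeSet_pathGraph hl, hcard, ← List.coe_toFinset, Nat.card_coe_set_eq, Set.ncard_coe_finset,
    List.toFinset_card_of_nodup (nodup_pathEdges hl), length_pathEdges]
  simp

lemma gWeight_pathGraph [Fintype V] {ρ : V → V → ℝ} (hsym : ∀ i j, ρ i j = ρ j i)
    {l : List V} (hl : l.Nodup) :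
    gWeight (Sym2.lift ⟨ρ, hsym⟩) (pathGraph l) = pathWeight ρ l := by
  have hedges : (pathGraph l).edgeSet.toFinset = (pathEdges l).toFinset := by
    ext e
    simp [edgeSet_pathGraph hl]
  rw [gWeight, hedges, List.sum_toFinset _ (nodup_pathEdges hl), sum_map_pathEdges]

lemma gWeight_le_pathWeight [Fintype V] [Nonempty V] {ρ : V → V → ℝ}
    (hsym : ∀ i j, ρ i j = ρ j i) {T : SimpleGraph V}
    (hTmin : ∀ T' : SimpleGraph V, T'.IsTree →
      gWeight (Sym2.lift ⟨ρ, hsym⟩) T ≤ gWeight (Sym2.lift ⟨ρ, hsym⟩) T')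
    {l : List V} (hl : l.Nodup) (hspan : ∀ v, v ∈ l) :
    gWeight (Sym2.lift ⟨ρ, hsym⟩) T ≤ pathWeight ρ l :=
  gWeight_pathGraph hsym hl ▸ hTmin _ (isTree_pathGraph hl hspan)

end PathGraph

section EulerTour

variable {V : Type*} {ρ : V → V → ℝ}

lemma sum_map_lift_mk_uncurry (hsym : ∀ i j, ρ i j = ρ j i) (P : List (V × V)) :
    ((P.map (Sym2.mk).uncurry).map (Sym2.lift ⟨ρ, hsym⟩)).sum =
      (P.map fun p => ρ p.1 p.2).sum := by
  rw [List.map_map]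
  rfl

lemma cycWeight_eq_gWeight_add_mWeight [Fintype V] [DecidableEq V]
    (hsym : ∀ i j, ρ i j = ρ j i) {T : SimpleGraph V} {M : List (V × V)} {w : List V}
    (hw : (↑(cycEdges w) : Multiset (Sym2 V)) =
      T.edgeSet.toFinset.val + ↑(M.map (Sym2.mk).uncurry)) :
    cycWeight ρ w = gWeight (Sym2.lift ⟨ρ, hsym⟩) T + mWeight ρ M := by
  have h := congrArg (fun m : Multiset (Sym2 V) => (m.map (Sym2.lift ⟨ρ, hsym⟩)).sum) hw
  simp only [Multiset.map_coe, Multiset.sum_coe, Multiset.map_add, Multiset.sum_add] at h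
  rw [cycWeight, mWeight, ← sum_map_lift_mk_uncurry hsym, ← sum_map_lift_mk_uncurry hsym]
  exact h

end EulerTour

theorem serdyukov_christofides_general {V : Type*} [Fintype V] [DecidableEq V]
    (ρ : V → V → ℝ) (hpos : ∀ i j, i ≠ j → 0 < ρ i j) (hsym : ∀ i j, ρ i j = ρ j i)
    (htri : ∀ i j k, ρ i j ≤ ρ i k + ρ k j) (hV : 3 ≤ Fintype.card V)
    -- T is a minimum spanning tree
    (T : SimpleGraph V)
    (hTmin : ∀ T' : SimpleGraph V, T'.IsTree →
      gWeight (Sym2.lift ⟨ρ, hsym⟩) T ≤ gWeight (Sym2.lift ⟨ρ, hsym⟩) T')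
    -- M is a minimum perfect matching on the odd-degree vertices X₁ of T
    (M : List (V × V))
    (hM : IsPM (Finset.univ.filter fun v => Odd (T.degree v)) M)
    (hMmin : ∀ M' : List (V × V),
      IsPM (Finset.univ.filter fun v => Odd (T.degree v)) M' →
        mWeight ρ M ≤ mWeight ρ M')
    -- w is an Eulerian circuit of the multigraph T ∪ M
    (w : List V)
    (hw : (↑(cycEdges w) : Multiset (Sym2 V)) = T.edgeSet.toFinset.val + ↑(M.map (Sym2.mk).uncurry))
    -- L* is a Hamiltonian cycle obtained from w by shortcutting
    (Lstar : List V) (hsub : Lstar.Sublist w)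
    -- L₀ is a minimum Hamiltonian cycle
    (L₀ : List V) (hL₀ : L₀.Nodup) (hL₀span : L₀.toFinset = Finset.univ) :
    cycWeight ρ Lstar < 3 / 2 * cycWeight ρ L₀ := by
  have hspan : ∀ v, v ∈ L₀ := fun v => List.mem_toFinset.mp (hL₀span ▸ Finset.mem_univ v)
  have hlen : L₀.length = Fintype.card V := by
    rw [← List.toFinset_card_of_nodup hL₀, hL₀span, Finset.card_univ]
  obtain ⟨a, t, rfl⟩ := List.exists_cons_of_length_pos (by omega : 0 < L₀.length)
  have ht : t ≠ [] := by rintro rfl; simp at hlen; omega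
  have : Nonempty V := ⟨a⟩
  have hshortcut := cycWeight_le_of_sublist htri hsub
  have heuler := cycWeight_eq_gWeight_add_mWeight hsym hw
  have htree := (gWeight_le_pathWeight hsym hTmin hL₀ hspan).trans_lt
    (pathWeight_lt_cycWeight hpos hL₀ ht)
  have hmatch := two_mul_mWeight_le_cycWeight htri hM hMmin hL₀ fun x _ => hspan x
  linarith

/-- Serdyukov–Christofides bound: any Hamiltonian cycle obtained by
shortcutting an Eulerian circuit of the multigraph `T ∪ M`, where `T` is a
minimum spanning tree and `M` a minimum perfect matching on the odd-degree
vertices of `T`, has weight strictly less than `3/2` times the minimum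
Hamiltonian cycle weight. -/
theorem serdyukov_christofides {V : Type*} [Fintype V] [DecidableEq V]
    (ρ : V → V → ℝ) (hpos : ∀ i j, i ≠ j → 0 < ρ i j) (hsym : ∀ i j, ρ i j = ρ j i)
    (htri : ∀ i j k, ρ i j ≤ ρ i k + ρ k j) (hV : 3 ≤ Fintype.card V)
    -- T is a minimum spanning tree
    (T : SimpleGraph V) (hT : T.IsTree)
    (hTmin : ∀ T' : SimpleGraph V, T'.IsTree →
      gWeight (Sym2.lift ⟨ρ, hsym⟩) T ≤ gWeight (Sym2.lift ⟨ρ, hsym⟩) T')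
    -- M is a minimum perfect matching on the odd-degree vertices X₁ of T
    (M : List (V × V))
    (hM : IsPM (Finset.univ.filter fun v => Odd (T.degree v)) M)
    (hMmin : ∀ M' : List (V × V),
      IsPM (Finset.univ.filter fun v => Odd (T.degree v)) M' →
        mWeight ρ M ≤ mWeight ρ M')
    -- w is an Eulerian circuit of the multigraph T ∪ M
    (w : List V)
    (hw : (↑(cycEdges w) : Multiset (Sym2 V)) = T.edgeSet.toFinset.val + ↑(M.map (Sym2.mk).uncurry))
    -- L* is a Hamiltonian cycle obtained from w by shortcutting
    (Lstar : List V) (hsub : Lstar.Sublist w) (hLstar : Lstar.Nodup)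
    (hLstarspan : Lstar.toFinset = Finset.univ)
    -- L₀ is a minimum Hamiltonian cycle
    (L₀ : List V) (hL₀ : L₀.Nodup) (hL₀span : L₀.toFinset = Finset.univ)
    (hL₀min : ∀ L : List V, L.Nodup → L.toFinset = Finset.univ →
      cycWeight ρ L₀ ≤ cycWeight ρ L) :
    cycWeight ρ Lstar < 3 / 2 * cycWeight ρ L₀ :=
  serdyukov_christofides_general ρ hpos hsym htri hV T hTmin M hM hMmin w hw Lstar hsub L₀ hL₀
    hL₀span
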